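/- The momentum-space Drinfeld double bracket on vector modes and form modes satisfies the mixed Jacobi identity: for vector modes (ξ₁,k₁), (ξ₂,k₂) and a form mode (η,q), the form-mode polarization of [[ξ₁,ξ₂],η] + [[ξ₂,η],ξ₁] + [[η,ξ₁],ξ₂] is zero, where the vector–vector bracket is the momentum-space Lie bracket, the vector–form bracket of a vector mode (ξ,k) and a form mode (η,q) is the form mode with polarization (ξ·(k+q))η + (ξ·η)k and momentum k+q, the form–vector bracket is minus the vector–form bracket, and form modes commute. -/
import Mathlib


namespace Stmt17

variable {V : Type*} [AddCommGroup V] [Module ℝ V]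

/-- The momentum-space Lie bracket of vector modes. -/
def lieMode (B : LinearMap.BilinForm ℝ V) (p q : V × V) : V × V :=
  (B p.1 q.2 • q.1 - B q.1 p.2 • p.1, p.2 + q.2)

/-- The vector–form bracket: of a vector mode `(ξ,k)` and a form mode `(η,q)`,
the form mode with polarization `(ξ·(k+q))η + (ξ·η)k` and momentum `k+q`. -/
def vfMode (B : LinearMap.BilinForm ℝ V) (p q : V × V) : V × V :=
  (B p.1 (p.2 + q.2) • q.1 + B p.1 q.1 • p.2, p.2 + q.2)

/-- The momentum-space Drinfeld double bracket satisfies the mixed Jacobi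
identity: for vector modes `(ξ₁,k₁)`, `(ξ₂,k₂)` and a form mode `(η,q)`, the
form-mode polarization of `[[ξ₁,ξ₂],η] + [[ξ₂,η],ξ₁] + [[η,ξ₁],ξ₂]` vanishes,
where the form–vector bracket is minus the vector–form bracket and form modes
commute. -/
theorem dd_mixed_jacobi (B : LinearMap.BilinForm ℝ V) (hB : B.IsSymm)
    (ξ₁ k₁ ξ₂ k₂ η q : V) :
    (vfMode B (lieMode B (ξ₁, k₁) (ξ₂, k₂)) (η, q)).1
      + (-(vfMode B (ξ₁, k₁) (vfMode B (ξ₂, k₂) (η, q))).1)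
      + (-(vfMode B (ξ₂, k₂)
            (-(vfMode B (ξ₁, k₁) (η, q)).1, k₁ + q)).1) = 0 := by
  simp only [vfMode, lieMode, map_add, map_sub, map_smul, map_neg,
    LinearMap.add_apply, LinearMap.sub_apply, LinearMap.smul_apply,
    LinearMap.neg_apply, smul_eq_mul]
  module

end Stmt17
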